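/- Let Γ be a tree on the vertex set [m+1] and let v_1,...,v_{m+1} be the maximal minors of the generic matrix A(Γ). Then {i,j} is an edge of Γ if and only if lcm(v_i, v_j) = v_j·x_{ji} = v_i·x_{ij} (up to sign). -/
import Mathlib


open MvPolynomial

namespace CMCodim2

noncomputable section

/-- The total degree of an exponent vector (of a monomial). -/
def mdeg {σ : Type*} (a : σ →₀ ℕ) : ℕ := a.sum fun _ e => e

/-- The height (codimension) of an ideal: the infimum of the heights of the
prime ideals containing it. -/
def idealHeight {R : Type*} [CommRing R] (I : Ideal R) : ℕ∞ :=
  ⨅ (p : PrimeSpectrum R) (_ : I ≤ p.asIdeal), Order.height p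

/-- An ideal `I` of a polynomial ring is a Cohen–Macaulay ideal of codimension `2`
iff it has height `2` and `R/I` has a free resolution
`0 → R^a → R^b → R → R/I → 0` of length `2` (Auslander–Buchsbaum). -/
def IsCMCodim2 {R : Type*} [CommRing R] (I : Ideal R) : Prop :=
  idealHeight I = 2 ∧
    ∃ (a b : ℕ) (f : (Fin a → R) →ₗ[R] (Fin b → R)) (g : (Fin b → R) →ₗ[R] R),
      Function.Injective f ∧ LinearMap.range f = LinearMap.ker g ∧
        LinearMap.range g = I

/-- The map `φ₁ : S^{m+1} → S`, `e_i ↦ u_i`, where `u_i` is the (monic) monomial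
with exponent vector `d i`. -/
def phi (K : Type*) [Field K] {σ : Type*} (m : ℕ) (d : Fin (m + 1) → (σ →₀ ℕ)) :
    (Fin (m + 1) → MvPolynomial σ K) →ₗ[MvPolynomial σ K] MvPolynomial σ K where
  toFun v := ∑ i, v i * monomial (d i) 1
  map_add' x y := by simp [add_mul, Finset.sum_add_distrib]
  map_smul' c x := by simp [Finset.mul_sum, mul_assoc]

/-- The Taylor relation `r_{ij} = u_{ji} e_j - u_{ij} e_i ∈ S^{m+1}` of the monomials
`u_i, u_j` with exponent vectors `d i, d j`; here `u_{ji} = u_i / gcd(u_i,u_j)`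
has exponent vector `d i - d j` (truncated subtraction). -/
def taylorRel (K : Type*) [Field K] {σ : Type*} (m : ℕ) (d : Fin (m + 1) → (σ →₀ ℕ))
    (i j : Fin (m + 1)) : Fin (m + 1) → MvPolynomial σ K := fun k =>
  if k = j then monomial (d i - d j) 1
  else if k = i then -(monomial (d j - d i) 1) else 0

/-- `t` lists the `m` (unordered) pairs of indices of Taylor relations forming the rows of
a Hilbert–Burch matrix of the ideal generated by the `m+1` monomials with exponent
vectors `d i`: the corresponding Taylor relations generate (hence, being `m` elements
generating the free rank-`m` module, minimally generate) the first syzygy module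
`U = ker φ₁`. -/
def IsHB (K : Type*) [Field K] {σ : Type*} (m : ℕ) (d : Fin (m + 1) → (σ →₀ ℕ))
    (t : Fin m → Fin (m + 1) × Fin (m + 1)) : Prop :=
  (∀ k, (t k).1 ≠ (t k).2) ∧
    Submodule.span (MvPolynomial σ K)
        (Set.range fun k => taylorRel K m d (t k).1 (t k).2) =
      LinearMap.ker (phi K m d)

/-- The graph on `[m+1]` whose edges `{i,j}` are the pairs of columns in which the rows
of a Hilbert–Burch matrix (given by the list `t` of pairs) have their nonzero entries. -/
def relGraph {m : ℕ} (t : Fin m → Fin (m + 1) × Fin (m + 1)) :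
    SimpleGraph (Fin (m + 1)) :=
  SimpleGraph.fromRel fun i j => ∃ k, t k = (i, j)

/-- `T(I)`: the set of relation trees (graphs of Hilbert–Burch matrices) of the ideal
generated by the `m+1` monomials with exponent vectors `d i`. -/
def relTrees (K : Type*) [Field K] {σ : Type*} (m : ℕ) (d : Fin (m + 1) → (σ →₀ ℕ)) :
    Set (SimpleGraph (Fin (m + 1))) :=
  {Γ | ∃ t, IsHB K m d t ∧ relGraph t = Γ}

/-- The Taylor graph `G(I)`: the union of all relation trees of `I`. -/
def taylorGraph (K : Type*) [Field K] {σ : Type*} (m : ℕ)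
    (d : Fin (m + 1) → (σ →₀ ℕ)) : SimpleGraph (Fin (m + 1)) :=
  sSup (relTrees K m d)

/-- `I` is (the monomial ideal) minimally generated by the `m+1` monic monomials with
exponent vectors `d i`. -/
def MinGens (K : Type*) [Field K] {σ : Type*} (m : ℕ) (d : Fin (m + 1) → (σ →₀ ℕ))
    (I : Ideal (MvPolynomial σ K)) : Prop :=
  I = Ideal.span (Set.range fun i => (monomial (d i) 1 : MvPolynomial σ K)) ∧
    ∀ j : Fin (m + 1), (monomial (d j) 1 : MvPolynomial σ K) ∉
      Ideal.span ((fun i => (monomial (d i) 1 : MvPolynomial σ K)) '' {i | i ≠ j})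

/-- The ideal generated by the `m+1` monomials with exponent vectors `d i` has a linear
resolution: all generators have the same degree and all the entries of every
Hilbert–Burch matrix of `I` are linear forms (i.e. every Taylor relation occurring as a
row of a Hilbert–Burch matrix is linear). -/
def HasLinearRes (K : Type*) [Field K] {σ : Type*} (m : ℕ)
    (d : Fin (m + 1) → (σ →₀ ℕ)) : Prop :=
  (∃ c, ∀ i, mdeg (d i) = c) ∧
    ∀ t, IsHB K m d t →
      ∀ k, mdeg (d (t k).1 - d (t k).2) = 1 ∧ mdeg (d (t k).2 - d (t k).1) = 1

/-- A graph is chordal if every cycle of length at least `4` has a chord, i.e. an edge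
of the graph joining two vertices of the cycle which is not an edge of the cycle. -/
def IsChordal {V : Type*} (G : SimpleGraph V) : Prop :=
  ∀ ⦃v : V⦄ (w : G.Walk v v), w.IsCycle → 4 ≤ w.length →
    ∃ a b, a ∈ w.support ∧ b ∈ w.support ∧ G.Adj a b ∧ s(a, b) ∉ w.edges

/-- A maximal clique of a graph. -/
def IsMaxClique {V : Type*} (G : SimpleGraph V) (s : Set V) : Prop :=
  G.IsClique s ∧ ∀ t : Set V, G.IsClique t → s ⊆ t → t = s

/-- `b` is the "path-begin" function of the tree `G`: for `i ≠ j`, `b i j` is the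
first vertex after `i` on the unique path in `G` from `i` to `j` (equivalently, the
neighbour of `i` which is one step closer to `j`). -/
def PathBegin {V : Type*} (G : SimpleGraph V) (b : V → V → V) : Prop :=
  ∀ i j : V, i ≠ j → G.Adj i (b i j) ∧ G.dist (b i j) j + 1 = G.dist i j

/-- The index set of the `2m` indeterminates `x_{ij}`: ordered pairs `(i,j)` such that
`{i,j}` is an edge of `G`. -/
abbrev EdgeVar {N : ℕ} (G : SimpleGraph (Fin N)) : Type :=
  {p : Fin N × Fin N // G.Adj p.1 p.2}

/-- `ε` enumerates the edges of `G` (each unordered edge appearing exactly once). -/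
def EdgeEnum {m : ℕ} (G : SimpleGraph (Fin (m + 1)))
    (ε : Fin m → Fin (m + 1) × Fin (m + 1)) : Prop :=
  ∀ i j : Fin (m + 1), G.Adj i j → ∃! k, ε k = (i, j) ∨ ε k = (j, i)

/-- The generic matrix `A(Γ)` attached to the tree `G` with edges enumerated by `ε`:
the `k`-th row, for the `k`-th edge `{i,j}`, has entry `-x_{ij}` in column `i`,
entry `x_{ji}` in column `j` and `0` elsewhere. -/
def genMat (K : Type*) [Field K] {m : ℕ} (G : SimpleGraph (Fin (m + 1)))
    (ε : Fin m → Fin (m + 1) × Fin (m + 1)) (hε : ∀ k, G.Adj (ε k).1 (ε k).2) :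
    Matrix (Fin m) (Fin (m + 1)) (MvPolynomial (EdgeVar G) K) := fun k l =>
  if l = (ε k).1 then -(X ⟨ε k, hε k⟩)
  else if l = (ε k).2 then X ⟨((ε k).2, (ε k).1), (hε k).symm⟩
  else 0

/-- `v_j`: the maximal minor of the generic matrix `A(Γ)` obtained by omitting the
`j`-th column. -/
def genMinor (K : Type*) [Field K] {m : ℕ} (G : SimpleGraph (Fin (m + 1)))
    (ε : Fin m → Fin (m + 1) × Fin (m + 1)) (hε : ∀ k, G.Adj (ε k).1 (ε k).2)
    (j : Fin (m + 1)) : MvPolynomial (EdgeVar G) K :=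
  ((genMat K G ε hε).submatrix id j.succAbove).det

/-- The monomial `∏_{i ≠ j} x_{i, b(i,j)}`. -/
def genV (K : Type*) [Field K] {m : ℕ} (G : SimpleGraph (Fin (m + 1)))
    (b : Fin (m + 1) → Fin (m + 1) → Fin (m + 1))
    (hb : ∀ i j : Fin (m + 1), i ≠ j → G.Adj i (b i j)) (j : Fin (m + 1)) :
    MvPolynomial (EdgeVar G) K :=
  ∏ i, if h : i = j then 1 else X ⟨(i, b i j), hb i j h⟩

/-- The exponent vector of the monomial `∏_{i ≠ j} x_{i, b(i,j)}`. -/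
def genD {m : ℕ} (G : SimpleGraph (Fin (m + 1)))
    (b : Fin (m + 1) → Fin (m + 1) → Fin (m + 1))
    (hb : ∀ i j : Fin (m + 1), i ≠ j → G.Adj i (b i j)) (j : Fin (m + 1)) :
    EdgeVar G →₀ ℕ :=
  ∑ i, if h : i = j then 0 else Finsupp.single ⟨(i, b i j), hb i j h⟩ 1

end

end CMCodim2


section Aux
open SimpleGraph

open SimpleGraph

variable {V : Type*} {G : SimpleGraph V}

/-- In a tree, for adjacent `u v`, `dist w u ≠ dist w v`. -/
lemma tree_dist_ne (hG : G.IsTree) {u v w : V} (h : G.Adj u v) :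
    G.dist w u ≠ G.dist w v := by
  classical
  intro hd
  obtain ⟨p, hp, hpl⟩ := hG.isConnected.exists_path_of_dist w u
  have hvs : v ∉ p.support := by
    intro hv
    have ht : G.dist w v ≤ (p.takeUntil v hv).length := SimpleGraph.dist_le _
    have hsum : (p.takeUntil v hv).length + (p.dropUntil v hv).length = p.length := by
      rw [← SimpleGraph.Walk.length_append, SimpleGraph.Walk.take_spec]
    have : (p.dropUntil v hv).length = 0 := by omega
    exact h.ne (SimpleGraph.Walk.eq_of_length_eq_zero this).symm
  have hvs' : v ∉ p.reverse.support := by rwa [SimpleGraph.Walk.support_reverse, List.mem_reverse]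
  set q := (SimpleGraph.Walk.cons h.symm p.reverse).reverse with hq
  have hqp : q.IsPath := by
    rw [SimpleGraph.Walk.isPath_reverse_iff]
    exact SimpleGraph.Walk.IsPath.cons (by rwa [SimpleGraph.Walk.isPath_reverse_iff]) hvs'
  have hql : q.length = G.dist w u + 1 := by
    simp [hq, hpl]
  obtain ⟨q', hq', hq'l⟩ := hG.isConnected.exists_path_of_dist w v
  have := (hG.existsUnique_path w v).unique hqp hq'
  rw [this] at hql
  omega

/-- In a tree, the neighbour of `k` closer to `j` is unique. -/
lemma tree_closer_unique (hG : G.IsTree) {k x x' j : V}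
    (hx : G.Adj k x) (hx' : G.Adj k x')
    (hdx : G.dist x j + 1 = G.dist k j) (hdx' : G.dist x' j + 1 = G.dist k j) :
    x = x' := by
  obtain ⟨wx, hwxl⟩ := hG.isConnected.exists_walk_length_eq_dist x j
  obtain ⟨wx', hwx'l⟩ := hG.isConnected.exists_walk_length_eq_dist x' j
  set P := SimpleGraph.Walk.cons hx wx with hP
  set P' := SimpleGraph.Walk.cons hx' wx' with hP'
  have hPp : P.IsPath := P.isPath_of_length_eq_dist (by simp [hP, hwxl, hdx])
  have hP'p : P'.IsPath := P'.isPath_of_length_eq_dist (by simp [hP', hwx'l, hdx'])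
  have hPP : P = P' := (hG.existsUnique_path k j).unique hPp hP'p
  have : P.getVert 1 = P'.getVert 1 := by rw [hPP]
  simpa [hP, hP', SimpleGraph.Walk.getVert_cons_succ] using this

section TreeB

variable {V : Type*} {G : SimpleGraph V}

/-- If `i` and `j` are adjacent then `b i j = j`. -/
lemma pathBegin_adj_eq {b : V → V → V} (hc : G.Connected) (hb : CMCodim2.PathBegin G b)
    {i j : V} (h : G.Adj i j) : b i j = j := by
  have hne := h.ne
  have h2 := (hb i j hne).2
  have h1 : G.dist i j = 1 := SimpleGraph.dist_eq_one_iff_adj.mpr h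
  have : G.dist (b i j) j = 0 := by omega
  exact hc.dist_eq_zero_iff.mp this

lemma pathBegin_step (hG : G.IsTree) {b : V → V → V} (hb : CMCodim2.PathBegin G b)
    {i j k : V} (hij : G.Adj i j) (hki : k ≠ i) (hkj : k ≠ j)
    (hdd : G.dist k j = G.dist k i + 1) : b k i = b k j := by
  have hc := hG.isConnected
  have hx := hb k i hki
  have hx' := hb k j hkj
  have h1 : G.dist (b k i) j ≤ G.dist (b k i) i + 1 := by
    have := hc.dist_triangle (u := b k i) (v := i) (w := j)
    have : G.dist i j = 1 := SimpleGraph.dist_eq_one_iff_adj.mpr hij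
    omega
  have h2 : G.dist k j ≤ 1 + G.dist (b k i) j := by
    have ht := hc.dist_triangle (u := k) (v := b k i) (w := j)
    have : G.dist k (b k i) = 1 := SimpleGraph.dist_eq_one_iff_adj.mpr hx.1
    omega
  have hkey : G.dist (b k i) j + 1 = G.dist k j := by omega
  exact tree_closer_unique hG hx.1 hx'.1 hkey hx'.2

/-- In a tree, if `i ~ j` and `k ∉ {i, j}` then `b k i = b k j`. -/
lemma pathBegin_eq_of_adj (hG : G.IsTree) {b : V → V → V} (hb : CMCodim2.PathBegin G b)
    {i j k : V} (hij : G.Adj i j) (hki : k ≠ i) (hkj : k ≠ j) : b k i = b k j := by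
  have hc := hG.isConnected
  have hne : G.dist k i ≠ G.dist k j := tree_dist_ne hG hij
  have h1 : G.dist k j ≤ G.dist k i + 1 := by
    have := hc.dist_triangle (u := k) (v := i) (w := j)
    have : G.dist i j = 1 := SimpleGraph.dist_eq_one_iff_adj.mpr hij
    omega
  have h2 : G.dist k i ≤ G.dist k j + 1 := by
    have := hc.dist_triangle (u := k) (v := j) (w := i)
    have : G.dist j i = 1 := SimpleGraph.dist_eq_one_iff_adj.mpr hij.symm
    omega
  rcases lt_or_gt_of_ne hne with hlt | hgt
  · exact pathBegin_step hG hb hij hki hkj (by omega)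
  · exact (pathBegin_step hG hb hij.symm hkj hki (by omega)).symm

end TreeB

section Finsupp

lemma edgeVar_eq_iff {m : ℕ} {G : SimpleGraph (Fin (m + 1))} {a c : Fin (m + 1)}
    {h : G.Adj a c} {w : CMCodim2.EdgeVar G} :
    (⟨(a, c), h⟩ : CMCodim2.EdgeVar G) = w ↔ a = w.1.1 ∧ c = w.1.2 := by
  cases w with
  | mk p hp => cases p; simp [Subtype.ext_iff, Prod.ext_iff]

lemma genD_apply {m : ℕ} (G : SimpleGraph (Fin (m + 1)))
    (b : Fin (m + 1) → Fin (m + 1) → Fin (m + 1))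
    (hb : ∀ i j : Fin (m + 1), i ≠ j → G.Adj i (b i j)) (j : Fin (m + 1))
    (w : CMCodim2.EdgeVar G) :
    CMCodim2.genD G b hb j w = if w.1.1 ≠ j ∧ w.1.2 = b w.1.1 j then 1 else 0 := by
  classical
  unfold CMCodim2.genD
  rw [Finsupp.finset_sum_apply, Finset.sum_eq_single w.1.1]
  · by_cases h : w.1.1 = j
    · simp [h]
    · simp only [dif_neg h, Finsupp.single_apply, edgeVar_eq_iff]
      by_cases h2 : w.1.2 = b w.1.1 j <;> simp [h, h2, eq_comm]
  · intro i _ hi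
    by_cases h : i = j
    · simp [h]
    · simp only [dif_neg h, Finsupp.single_apply, edgeVar_eq_iff]
      simp [hi]
  · intro h; exact absurd (Finset.mem_univ _) h

lemma Xmul_eq_iff (K : Type*) [Field K] {σ : Type*} (p q : σ) (d e : σ →₀ ℕ) :
    (MvPolynomial.X p : MvPolynomial σ K) * MvPolynomial.monomial d 1 =
        MvPolynomial.X q * MvPolynomial.monomial e 1 ↔
      Finsupp.single p 1 + d = Finsupp.single q 1 + e := by
  rw [← pow_one (MvPolynomial.X p), ← pow_one (MvPolynomial.X q),
    ← MvPolynomial.monomial_single_add, ← MvPolynomial.monomial_single_add,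
    MvPolynomial.monomial_eq_monomial_iff]
  simp

end Finsupp

end Aux

open CMCodim2 MvPolynomial
/-- Let `Γ` be a tree on the vertex set `[m+1]` and `v_1,...,v_{m+1}`
the (monomial, up to sign) maximal minors of the generic matrix `A(Γ)`, with exponent
vectors `genD`. Then `{i,j}` is an edge of `Γ` if and only if
`lcm(v_i, v_j) = v_j · x_{ji} = v_i · x_{ij}`; equivalently, iff `lcm(v_i,v_j)` is
obtained from each of `v_i`, `v_j` by multiplying with a single variable, in which case
the variables are `x_{ij}` and `x_{ji}`. -/
theorem statement9 (K : Type*) [Field K] {m : ℕ}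
    (G : SimpleGraph (Fin (m + 1))) (hG : G.IsTree)
    (b : Fin (m + 1) → Fin (m + 1) → Fin (m + 1)) (hb : PathBegin G b) :
    ∀ i j : Fin (m + 1), i ≠ j →
      ((G.Adj i j ↔ ∃ p q : EdgeVar G,
          (X p : MvPolynomial (EdgeVar G) K) *
              monomial (genD G b (fun i j h => (hb i j h).1) i) 1 =
            X q * monomial (genD G b (fun i j h => (hb i j h).1) j) 1) ∧
        ∀ h : G.Adj i j,
          (X (⟨(i, j), h⟩ : EdgeVar G) : MvPolynomial (EdgeVar G) K) *
              monomial (genD G b (fun i j h => (hb i j h).1) i) 1 =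
            X ⟨(j, i), h.symm⟩ * monomial (genD G b (fun i j h => (hb i j h).1) j) 1) := by
  classical
  intro i j hij
  have hc := hG.isConnected
  have part2 : ∀ h : G.Adj i j,
      (X (⟨(i, j), h⟩ : EdgeVar G) : MvPolynomial (EdgeVar G) K) *
          monomial (genD G b (fun i j h => (hb i j h).1) i) 1 =
        X ⟨(j, i), h.symm⟩ * monomial (genD G b (fun i j h => (hb i j h).1) j) 1 := by
    intro h
    rw [Xmul_eq_iff]
    have hbij : b i j = j := pathBegin_adj_eq hc hb h
    have hbji : b j i = i := pathBegin_adj_eq hc hb h.symm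
    ext w
    simp only [Finsupp.add_apply, Finsupp.single_apply, genD_apply, edgeVar_eq_iff]
    rcases eq_or_ne w.1.1 i with h1 | h1
    · simp [h1, hij, Ne.symm hij, hbij, eq_comm]
    · rcases eq_or_ne w.1.1 j with h2 | h2
      · simp [h2, hij, Ne.symm hij, hbji, eq_comm, Ne.symm h1]
      · have hbk : b w.1.1 i = b w.1.1 j := pathBegin_eq_of_adj hG hb h h1 h2
        simp [Ne.symm h1, Ne.symm h2, h1, h2, hbk]
  refine ⟨⟨fun h => ⟨⟨(i, j), h⟩, ⟨(j, i), h.symm⟩, part2 h⟩, ?_⟩, part2⟩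
  rintro ⟨p, q, hpq⟩
  rw [Xmul_eq_iff] at hpq
  by_cases hd1 : G.dist i j = 1
  · exact SimpleGraph.dist_eq_one_iff_adj.mp hd1
  exfalso
  have hk := hb i j hij
  have hkj : b i j ≠ j := by
    intro hh
    rw [hh] at hk
    have h2 := hk.2
    rw [SimpleGraph.dist_self] at h2
    omega
  have hki : b i j ≠ i := (G.ne_of_adj hk.1).symm
  have hj := hb j i (Ne.symm hij)
  have hpv : p = ⟨(i, b i j), hk.1⟩ := by
    have e0 := DFunLike.congr_fun hpq (⟨(i, b i j), hk.1⟩ : EdgeVar G)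
    simp only [Finsupp.add_apply, Finsupp.single_apply, genD_apply] at e0
    simp only [ne_eq, not_true_eq_false, false_and, if_false, hij, not_false_eq_true,
      true_and, if_pos rfl] at e0
    by_cases hp : p = (⟨(i, b i j), hk.1⟩ : EdgeVar G)
    · exact hp
    · rw [if_neg hp] at e0
      split_ifs at e0 <;> omega
  have hqv : q = ⟨(j, b j i), hj.1⟩ := by
    have e1 := DFunLike.congr_fun hpq (⟨(j, b j i), hj.1⟩ : EdgeVar G)
    simp only [Finsupp.add_apply, Finsupp.single_apply, genD_apply] at e1
    simp only [ne_eq, not_true_eq_false, false_and, if_false, Ne.symm hij, not_false_eq_true,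
      true_and, if_pos rfl] at e1
    by_cases hq : q = (⟨(j, b j i), hj.1⟩ : EdgeVar G)
    · exact hq
    · rw [if_neg hq] at e1
      split_ifs at e1 <;> omega
  have hbk : b (b i j) i = b (b i j) j := by
    have hki' := hb (b i j) i hki
    have e2 := DFunLike.congr_fun hpq (⟨(b i j, b (b i j) i), hki'.1⟩ : EdgeVar G)
    simp only [Finsupp.add_apply, Finsupp.single_apply, genD_apply, hpv, hqv,
      edgeVar_eq_iff] at e2
    simp only [Ne.symm hki, Ne.symm hkj, false_and, if_false, hki, not_false_eq_true,
      true_and, if_pos rfl, ne_eq] at e2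
    by_cases hc2 : b (b i j) i = b (b i j) j
    · exact hc2
    · exfalso
      split_ifs at e2 <;> omega
  have h1 : b (b i j) i = i := pathBegin_adj_eq hc hb hk.1.symm
  have h2 := (hb (b i j) j hkj).2
  rw [← hbk, h1] at h2
  have h3 := hk.2
  omega
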